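/- arXiv:2508.21543 — 2 statements merged into one kernel-verified Lean document; each statement's English description precedes it below -/
import Mathlib

section
/- Let (X, Σ, μ) and (Y, Γ, ν) be strictly localizable measure spaces, T : L¹(X, μ) → L¹(Y, ν) a bounded operator, and Θ ⊆ Y a measurable set of finite measure. Then α_Θ(T) ≤ ‖T‖_{w,Θ}, where α_Θ(T) = limsup_{ν(B)→0, B⊆Θ} ‖χ_{Y∖Θ}T + χ_B T‖ and ‖T‖_{w,Θ} is the infimum of ‖T − W‖ over all weakly compact operators W : L¹(X, μ) → L¹(Y, ν) whose range is contained in L¹(Θ). -/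
open MeasureTheory

/-- A measure space is *strictly localizable* if it decomposes into a partition of
measurable sets of finite measure which determines measurability and measure. -/
def StrictlyLocalizable {Y : Type*} [MeasurableSpace Y] (ν : Measure Y) : Prop :=
  ∃ (ι : Type) (Y' : ι → Set Y),
    Pairwise (Function.onFun Disjoint Y') ∧
    (⋃ i, Y' i) = Set.univ ∧
    (∀ i, MeasurableSet (Y' i) ∧ ν (Y' i) < ⊤) ∧
    (∀ A : Set Y, (∀ i, MeasurableSet (A ∩ Y' i)) → MeasurableSet A) ∧
    (∀ A : Set Y, MeasurableSet A → ν A = ∑' i, ν (A ∩ Y' i))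

/-- An operator between normed spaces is weakly compact if the image of the closed unit
ball is contained in a weakly compact set. -/
def IsWeaklyCompactOperator {E F : Type*} [NormedAddCommGroup E] [NormedSpace ℝ E]
    [NormedAddCommGroup F] [NormedSpace ℝ F] (T : E →L[ℝ] F) : Prop :=
  ∃ C : Set (WeakSpace ℝ F), IsCompact C ∧
    ∀ x ∈ Metric.closedBall (0 : E) 1, toWeakSpace ℝ F (T x) ∈ C

/-- The norm of `χ_S ∘ T`, i.e. the supremum over the unit ball of the `L¹`-norm of `T f`
restricted to the measurable set `S`. -/
noncomputable def opNormOn {X Y : Type*} [MeasurableSpace X] [MeasurableSpace Y]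
    {μ : Measure X} {ν : Measure Y} (T : Lp ℝ 1 μ →L[ℝ] Lp ℝ 1 ν) (S : Set Y) : ℝ :=
  sSup {r : ℝ | ∃ f : Lp ℝ 1 μ, ‖f‖ ≤ 1 ∧ r = ∫ y in S, |(T f : Y → ℝ) y| ∂ν}

/-- The localized measure of weak noncompactness
`α_Θ(T) = limsup_{ν(B) → 0, B ⊆ Θ} ‖χ_{Y∖Θ} T + χ_B T‖`, expressed as an infimum over
`δ > 0` of suprema over measurable `B ⊆ Θ` with `ν B < δ`. -/
noncomputable def alphaTheta {X Y : Type*} [MeasurableSpace X] [MeasurableSpace Y]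
    {μ : Measure X} {ν : Measure Y} (T : Lp ℝ 1 μ →L[ℝ] Lp ℝ 1 ν) (Θ : Set Y) : ℝ :=
  sInf {r : ℝ | ∃ δ : ℝ, 0 < δ ∧
    r = sSup {s : ℝ | ∃ B : Set Y, B ⊆ Θ ∧ MeasurableSet B ∧ ν B < ENNReal.ofReal δ ∧
      s = opNormOn T (Θᶜ ∪ B)}}

/-- The distance from `T` to the weakly compact operators whose range is (a.e.) supported
in `Θ`. -/
noncomputable def weakEssNormOn {X Y : Type*} [MeasurableSpace X] [MeasurableSpace Y]
    {μ : Measure X} {ν : Measure Y} (T : Lp ℝ 1 μ →L[ℝ] Lp ℝ 1 ν) (Θ : Set Y) : ℝ :=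
  sInf {r : ℝ | ∃ W : Lp ℝ 1 μ →L[ℝ] Lp ℝ 1 ν, IsWeaklyCompactOperator W ∧
    (∀ f : Lp ℝ 1 μ, ∀ᵐ y ∂ν, y ∉ Θ → (W f : Y → ℝ) y = 0) ∧ r = ‖T - W‖}

/-!
The heart of the matter is the easy half of the Dunford–Pettis theorem: a weakly compact subset of
`L¹(ν)` is uniformly integrable. Granting it, let `W` be weakly compact with range in `L¹(Θ)`. For
`‖f‖ ≤ 1` and `B` of small measure, `W f` vanishes off `Θ`, so
`‖χ_{Y∖Θ ∪ B} T f‖ ≤ ‖(T - W) f‖ + ‖χ_B W f‖ ≤ ‖T - W‖ + ε`, whence `α_Θ(T) ≤ ‖T - W‖`.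

Uniform integrability is proved by a sliding hump. If it failed, there would be `g n` in the weakly
compact set and sets `B n` with `∑ ν (B n) < ∞` and `∫_{B n} g n > c` (replacing `g n` by `-g n` if
necessary). Passing to a subsequence and removing from each `B n` the later ones makes the sets
disjoint while each `g n` stays small on the later sets; a second subsequence, chosen near a weak
cluster point, makes `g k` small on the earlier sets as well. Then `∫` over `⋃ j ≥ M, A j` of `g k`
is at least `c / 2` for every `k ≥ M`, whereas at a weak cluster point of `(g k)` it tends to `0` as
`M → ∞`; this contradicts the weak continuity of `g ↦ ∫_S g`.
-/

open Filter Topology Set Function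
open scoped ENNReal

theorem Filter.extraction_forall_lt_of_frequently {P : ℕ → Prop} {r : ℕ → ℕ → Prop}
    (h : ∀ s : Finset ℕ, ∃ᶠ b in atTop, P b ∧ ∀ a ∈ s, r a b) :
    ∃ φ : ℕ → ℕ, StrictMono φ ∧ (∀ n, P (φ n)) ∧ ∀ m n, m < n → r (φ m) (φ n) := by
  obtain ⟨φ, hP, hr⟩ := exists_seq_of_forall_finset_exists P (fun a b => a < b ∧ r a b)
    fun s _ => ((h s).and_eventually ((eventually_all_finset s).2 fun a _ =>
      eventually_gt_atTop a)).exists.imp fun _ hb => ⟨hb.1.1, fun a ha => ⟨hb.2 a ha, hb.1.2 a ha⟩⟩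
  exact ⟨φ, strictMono_nat_of_lt_succ fun n => (hr n (n + 1) n.lt_succ_self).1, hP,
    fun m n hmn => (hr m n hmn).2⟩

theorem MapClusterPt.extraction_forall_lt {X : Type*} [TopologicalSpace X] {x : X} {u : ℕ → X}
    (hx : MapClusterPt x atTop u) {Q : ℕ → X → Prop} (hQ : ∀ a, ∀ᶠ x' in 𝓝 x, Q a x')
    {P : ℕ → Prop} (hP : ∀ᶠ b in atTop, P b) :
    ∃ φ : ℕ → ℕ, StrictMono φ ∧ (∀ n, P (φ n)) ∧ ∀ m n, m < n → Q (φ m) (u (φ n)) :=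
  Filter.extraction_forall_lt_of_frequently fun s =>
    ((hx.frequently ((eventually_all_finset s).2 fun a _ => hQ a)).and_eventually hP).mono
      fun _ hb => ⟨hb.2, hb.1⟩

theorem limsup_eq_empty_of_pairwise_disjoint {α : Type*} {s : ℕ → Set α}
    (hd : Pairwise (Disjoint on s)) : limsup s atTop = ∅ := by
  refine eq_empty_iff_forall_notMem.2 fun y hy => ?_
  rw [mem_limsup_iff_frequently_mem, frequently_atTop] at hy
  obtain ⟨n, -, hn⟩ := hy 0
  obtain ⟨m, hm, hm'⟩ := hy (n + 1)
  exact disjoint_left.1 (hd (by omega : n ≠ m)) hn hm'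

theorem pairwise_disjoint_diff_iUnion_ge_succ {α : Type*} (s : ℕ → Set α) :
    Pairwise (Disjoint on fun k => s k \ ⋃ j ≥ k + 1, s j) := by
  refine (pairwise_disjoint_on _).2 fun k l hkl => disjoint_left.2 fun y hk hl => hk.2 ?_
  exact mem_biUnion (by omega : l ≥ k + 1) hl.1

namespace MeasureTheory

variable {Y : Type*} [MeasurableSpace Y] {ν : Measure Y}

theorem setIntegral_union_le_add {f : Y → ℝ} (hf : Integrable f ν) (hf0 : 0 ≤ f) (s t : Set Y) :
    ∫ y in s ∪ t, f y ∂ν ≤ ∫ y in s, f y ∂ν + ∫ y in t, f y ∂ν := by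
  rw [← integral_add_measure hf.integrableOn hf.integrableOn]
  exact integral_mono_measure (Measure.restrict_union_le s t) (.of_forall hf0)
    (hf.restrict.add_measure hf.restrict)

theorem setIntegral_abs_mono_set {f : Y → ℝ} (hf : Integrable f ν) {s t : Set Y} (hst : s ⊆ t) :
    ∫ y in s, |f y| ∂ν ≤ ∫ y in t, |f y| ∂ν :=
  setIntegral_mono_set hf.abs.integrableOn (.of_forall fun _ => abs_nonneg _) hst.eventuallyLE

theorem sub_le_setIntegral_diff {f : Y → ℝ} (hf : Integrable f ν) (s : Set Y) {t : Set Y}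
    (ht : MeasurableSet t) : ∫ y in s, f y ∂ν - ∫ y in t, |f y| ∂ν ≤ ∫ y in s \ t, f y ∂ν := by
  have hst : ∫ y in s ∩ t, f y ∂ν ≤ ∫ y in t, |f y| ∂ν :=
    (integral_mono hf.integrableOn hf.abs.integrableOn fun _ => le_abs_self _).trans
      (setIntegral_abs_mono_set hf inter_subset_right)
  linarith [integral_inter_add_sdiff ht (hf.integrableOn (s := s) (μ := ν))]

theorem tendsto_setIntegral_iUnion_ge_nhds_zero {s : ℕ → Set Y} (hs : ∀ n, MeasurableSet (s n))
    (hlim : ν (limsup s atTop) = 0) {f : Y → ℝ} (hf : Integrable f ν) :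
    Tendsto (fun n => ∫ y in ⋃ m ≥ n, s m, f y ∂ν) atTop (𝓝 0) := by
  have h := tendsto_setIntegral_of_antitone (μ := ν) (f := f) (s := fun n => ⋃ m ≥ n, s m)
    (fun n => .iUnion fun m => .iUnion fun _ => hs m)
    (fun n n' hnn' => iUnion₂_subset fun m hm => subset_biUnion_of_mem (hnn'.trans hm))
    ⟨0, hf.integrableOn⟩
  rw [limsup_eq_iInf_iSup_of_nat] at hlim
  rwa [setIntegral_measure_zero (s := ⋂ n, ⋃ m ≥ n, s m) _ hlim] at h

theorem setIntegral_iUnion_ge_eq_sum_add {A : ℕ → Set Y} (hA : ∀ j, MeasurableSet (A j))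
    (hAd : Pairwise (Disjoint on A)) {f : Y → ℝ} (hf : Integrable f ν) {M k : ℕ} (hMk : M ≤ k) :
    ∫ y in ⋃ j ≥ M, A j, f y ∂ν =
      ∑ j ∈ Finset.Ico M k, ∫ y in A j, f y ∂ν + ∫ y in ⋃ j ≥ k, A j, f y ∂ν := by
  have hsplit : ⋃ j ≥ M, A j = (⋃ j ∈ Finset.Ico M k, A j) ∪ ⋃ j ≥ k, A j := by
    ext y
    simp only [mem_union, mem_iUnion, Finset.mem_Ico, exists_prop]
    constructor
    · rintro ⟨j, hj, hy⟩
      by_cases hjk : j < k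
      exacts [.inl ⟨j, ⟨hj, hjk⟩, hy⟩, .inr ⟨j, not_lt.1 hjk, hy⟩]
    · rintro (⟨j, hj, hy⟩ | ⟨j, hj, hy⟩)
      exacts [⟨j, hj.1, hy⟩, ⟨j, hMk.trans hj, hy⟩]
  have hdisj : Disjoint (⋃ j ∈ Finset.Ico M k, A j) (⋃ j ≥ k, A j) := by
    simp only [disjoint_iUnion_left, disjoint_iUnion_right, Finset.mem_Ico]
    exact fun i hi j hj => hAd (by omega)
  rw [hsplit, setIntegral_union hdisj (.iUnion fun j => .iUnion fun _ => hA j) hf.integrableOn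
    hf.integrableOn, integral_biUnion_finset _ (fun j _ => hA j) (fun i _ j _ hij => hAd hij)
    fun j _ => hf.integrableOn]

namespace Lp

theorem setIntegral_abs_le_norm (f : Lp ℝ 1 ν) (s : Set Y) : ∫ y in s, |f y| ∂ν ≤ ‖f‖ := by
  rw [L1.norm_eq_integral_norm]
  exact setIntegral_le_integral (L1.integrable_coeFn f).norm (.of_forall fun _ => abs_nonneg _)

theorem eLpNorm_indicator_eq_ofReal_setIntegral_abs (f : Lp ℝ 1 ν) {s : Set Y}
    (hs : MeasurableSet s) : eLpNorm (s.indicator f) 1 ν = ENNReal.ofReal (∫ y in s, |f y| ∂ν) := by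
  rw [eLpNorm_indicator_eq_eLpNorm_restrict hs, eLpNorm_one_eq_lintegral_enorm,
    ← ofReal_integral_norm_eq_lintegral_enorm (L1.integrable_coeFn f).restrict]
  rfl

theorem setIntegral_compl_union_abs_le (g h : Lp ℝ 1 ν) {Θ : Set Y}
    (hΘ : ∀ᵐ y ∂ν, y ∉ Θ → h y = 0) (B : Set Y) :
    ∫ y in Θᶜ ∪ B, |g y| ∂ν ≤ ‖g - h‖ + ∫ y in B, |h y| ∂ν := by
  have hh : Integrable (fun y => |h y|) ν := (L1.integrable_coeFn h).abs
  have hgh : Integrable (fun y => |(g - h) y|) ν := (L1.integrable_coeFn (g - h)).abs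
  have hoff : ∫ y in Θᶜ, |h y| ∂ν = 0 :=
    setIntegral_eq_zero_of_ae_eq_zero (hΘ.mono fun y hy hyΘ => by simp [hy hyΘ])
  calc ∫ y in Θᶜ ∪ B, |g y| ∂ν ≤ ∫ y in Θᶜ ∪ B, (|(g - h) y| + |h y|) ∂ν := by
        refine integral_mono_ae (L1.integrable_coeFn g).abs.integrableOn
          (hgh.add hh).integrableOn (ae_restrict_of_ae ?_)
        filter_upwards [Lp.coeFn_sub g h] with y hy
        rw [hy, Pi.sub_apply]
        linarith [abs_sub_abs_le_abs_sub (g y) (h y)]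
    _ = ∫ y in Θᶜ ∪ B, |(g - h) y| ∂ν + ∫ y in Θᶜ ∪ B, |h y| ∂ν :=
        integral_add hgh.integrableOn hh.integrableOn
    _ ≤ ‖g - h‖ + (∫ y in Θᶜ, |h y| ∂ν + ∫ y in B, |h y| ∂ν) :=
        add_le_add (setIntegral_abs_le_norm (g - h) _)
          (setIntegral_union_le_add hh (fun _ => abs_nonneg _) _ _)
    _ = ‖g - h‖ + ∫ y in B, |h y| ∂ν := by rw [hoff, zero_add]

theorem exists_lt_setIntegral_of_lt_setIntegral_abs (g : Lp ℝ 1 ν) {s : Set Y}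
    (hs : MeasurableSet s) {ε : ℝ} (hε : ε < ∫ y in s, |g y| ∂ν) :
    ∃ t ⊆ s, MeasurableSet t ∧ ∃ h ∈ ({g, -g} : Set (Lp ℝ 1 ν)), ε / 2 < ∫ y in t, h y ∂ν := by
  have hg := L1.integrable_coeFn g
  have hP : MeasurableSet {y | 0 ≤ g y} :=
    measurableSet_le measurable_const (Lp.stronglyMeasurable g).measurable
  have hpos : ∫ y in s ∩ {y | 0 ≤ g y}, |g y| ∂ν = ∫ y in s ∩ {y | 0 ≤ g y}, g y ∂ν :=
    setIntegral_congr_fun (hs.inter hP) fun y hy => abs_of_nonneg hy.2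
  have hneg : ∫ y in s \ {y | 0 ≤ g y}, |g y| ∂ν = ∫ y in s \ {y | 0 ≤ g y}, (-g) y ∂ν := by
    refine setIntegral_congr_ae (hs.diff hP) ?_
    filter_upwards [Lp.coeFn_neg g] with y hy hys
    rw [hy, Pi.neg_apply, abs_of_neg (not_le.1 hys.2)]
  have hsum := integral_inter_add_sdiff hP hg.abs.integrableOn (s := s) (μ := ν)
  by_cases h : ε / 2 < ∫ y in s ∩ {y | 0 ≤ g y}, g y ∂ν
  · exact ⟨_, inter_subset_left, hs.inter hP, g, .inl rfl, h⟩
  · exact ⟨_, sdiff_subset, hs.diff hP, -g, .inr rfl, by linarith⟩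

end Lp

theorem continuous_setIntegral_toWeakSpace_symm (s : Set Y) :
    Continuous fun x : WeakSpace ℝ (Lp ℝ 1 ν) =>
      ∫ y in s, (toWeakSpace ℝ (Lp ℝ 1 ν)).symm x y ∂ν := by
  let Φ : Lp ℝ 1 ν →L[ℝ] ℝ := L1.integralCLM.comp (LpToLpRestrictCLM Y ℝ ℝ ν 1 s)
  have hΦ : ∀ f : Lp ℝ 1 ν, Φ f = ∫ y in s, f y ∂ν := fun f => by
    rw [ContinuousLinearMap.comp_apply, ← L1.integral_eq, L1.integral_eq_integral]
    exact integral_congr_ae (LpToLpRestrictCLM_coeFn ℝ s f)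
  exact (WeakBilin.eval_continuous (topDualPairing ℝ (Lp ℝ 1 ν)).flip Φ).congr fun x => hΦ _

section WeaklyCompact

variable {K : Set (WeakSpace ℝ (Lp ℝ 1 ν))}

theorem _root_.IsCompact.exists_setIntegral_le_of_offDiag_le (hK : IsCompact K)
    {z : ℕ → Lp ℝ 1 ν} (hzK : ∀ k, toWeakSpace ℝ _ (z k) ∈ K) {A : ℕ → Set Y}
    (hA : ∀ j, MeasurableSet (A j)) (hAd : Pairwise (Disjoint on A)) {c : ℝ} (hc : 0 < c)
    (hpast : ∀ k, ∑ j ∈ Finset.range k, |∫ y in A j, z k y ∂ν| ≤ c / 4)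
    (hfuture : ∀ k, ∫ y in ⋃ j ≥ k + 1, A j, |z k y| ∂ν ≤ c / 4) :
    ∃ k, ∫ y in A k, z k y ∂ν ≤ c := by
  by_contra! hdiag
  have hlow : ∀ M k, M ≤ k → c / 2 ≤ ∫ y in ⋃ j ≥ M, A j, z k y ∂ν := by
    intro M k hMk
    rw [setIntegral_iUnion_ge_eq_sum_add hA hAd (L1.integrable_coeFn (z k)) (hMk.trans k.le_succ),
      Finset.sum_Ico_succ_top hMk]
    have hmid : |∑ j ∈ Finset.Ico M k, ∫ y in A j, z k y ∂ν| ≤ c / 4 :=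
      (Finset.abs_sum_le_sum_abs _ _).trans <| (Finset.sum_le_sum_of_subset_of_nonneg
        (fun j hj => Finset.mem_range.2 (Finset.mem_Ico.1 hj).2)
        fun _ _ _ => abs_nonneg _).trans (hpast k)
    have htail : |∫ y in ⋃ j ≥ k + 1, A j, z k y ∂ν| ≤ c / 4 :=
      abs_integral_le_integral_abs.trans (hfuture k)
    linarith [abs_le.1 hmid, abs_le.1 htail, hdiag k]
  obtain ⟨x, -, hx⟩ := hK.exists_mapClusterPt_of_frequently (l := atTop) (.of_forall hzK)
  obtain ⟨M, hM⟩ := ((tendsto_setIntegral_iUnion_ge_nhds_zero hA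
    (by rw [limsup_eq_empty_of_pairwise_disjoint hAd, measure_empty])
    (L1.integrable_coeFn ((toWeakSpace ℝ _).symm x))).eventually
      (gt_mem_nhds (half_pos hc))).exists
  have hnear := (continuous_setIntegral_toWeakSpace_symm _).continuousAt.eventually (gt_mem_nhds hM)
  obtain ⟨k, hk, hMk⟩ := ((hx.frequently hnear).and_eventually (eventually_ge_atTop M)).exists
  exact (hlow M k hMk).not_gt hk

theorem _root_.IsCompact.exists_setIntegral_le_of_tail_le (hK : IsCompact K)
    {g : ℕ → Lp ℝ 1 ν} (hgK : ∀ n, toWeakSpace ℝ _ (g n) ∈ K) {A : ℕ → Set Y}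
    (hA : ∀ j, MeasurableSet (A j)) (hAd : Pairwise (Disjoint on A)) {c : ℝ} (hc : 0 < c)
    (hfuture : ∀ n, ∫ y in ⋃ j ≥ n + 1, A j, |g n y| ∂ν ≤ c / 4) :
    ∃ n, ∫ y in A n, g n y ∂ν ≤ c := by
  obtain ⟨x, -, hx⟩ := hK.exists_mapClusterPt_of_frequently (l := atTop) (.of_forall hgK)
  set x₀ := (toWeakSpace ℝ (Lp ℝ 1 ν)).symm x
  obtain ⟨N, hN⟩ := ((tendsto_setIntegral_iUnion_ge_nhds_zero hA
    (by rw [limsup_eq_empty_of_pairwise_disjoint hAd, measure_empty])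
    (L1.integrable_coeFn x₀).abs).eventually (ge_mem_nhds (by positivity : 0 < c / 8))).exists
  -- Both error terms are summable in `a`: the tolerances geometrically, the `∫_{A a} |x₀|`
  -- because the `A a` are disjoint.
  have hψ : ∀ a, ∀ᶠ x' in 𝓝 x, |∫ y in A a, (toWeakSpace ℝ (Lp ℝ 1 ν)).symm x' y ∂ν| <
      ∫ y in A a, |x₀ y| ∂ν + c / 16 * (1 / 2) ^ a := fun a =>
    (continuous_setIntegral_toWeakSpace_symm _).abs.continuousAt.eventually <| gt_mem_nhds <|
      abs_integral_le_integral_abs.trans_lt (lt_add_of_pos_right _ (by positivity))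
  obtain ⟨φ, hφ, hNφ, hφx⟩ := hx.extraction_forall_lt hψ (eventually_ge_atTop N)
  have hAφ : Pairwise (Disjoint on fun j => A (φ j)) := hAd.comp_of_injective hφ.injective
  have hpast : ∀ k, ∑ j ∈ Finset.range k, |∫ y in A (φ j), g (φ k) y ∂ν| ≤ c / 4 := by
    intro k
    calc ∑ j ∈ Finset.range k, |∫ y in A (φ j), g (φ k) y ∂ν|
        ≤ ∑ j ∈ Finset.range k, (∫ y in A (φ j), |x₀ y| ∂ν + c / 16 * (1 / 2) ^ j) := by
          refine Finset.sum_le_sum fun j hj => (hφx j k (Finset.mem_range.1 hj)).le.trans ?_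
          have hpow : (1 / 2 : ℝ) ^ φ j ≤ (1 / 2) ^ j :=
            pow_le_pow_of_le_one (by norm_num) (by norm_num) (hφ.id_le j)
          gcongr
      _ = ∫ y in ⋃ j ∈ Finset.range k, A (φ j), |x₀ y| ∂ν +
            c / 16 * ∑ j ∈ Finset.range k, (1 / 2 : ℝ) ^ j := by
          rw [Finset.sum_add_distrib, Finset.mul_sum, integral_biUnion_finset _ (fun j _ => hA _)
            (fun i _ j _ hij => hAφ hij) fun j _ => (L1.integrable_coeFn x₀).abs.integrableOn]
      _ ≤ c / 8 + c / 16 * 2 := by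
          gcongr
          · exact (setIntegral_abs_mono_set (L1.integrable_coeFn x₀)
              (iUnion₂_subset fun j _ => subset_biUnion_of_mem (hNφ j))).trans hN
          · exact sum_geometric_two_le k
      _ = c / 4 := by ring
  have hfuture' : ∀ k, ∫ y in ⋃ j ≥ k + 1, A (φ j), |g (φ k) y| ∂ν ≤ c / 4 := fun k =>
    (setIntegral_abs_mono_set (L1.integrable_coeFn _) (iUnion₂_subset fun j hj =>
      subset_biUnion_of_mem (hφ (by omega : k < j)))).trans (hfuture (φ k))
  obtain ⟨k, hk⟩ := hK.exists_setIntegral_le_of_offDiag_le (z := g ∘ φ) (fun k => hgK _)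
    (A := A ∘ φ) (fun j => hA _) hAφ hc hpast hfuture'
  exact ⟨φ k, hk⟩

theorem _root_.IsCompact.exists_setIntegral_le_of_tsum_measure_ne_top (hK : IsCompact K)
    {g : ℕ → Lp ℝ 1 ν} (hgK : ∀ n, toWeakSpace ℝ _ (g n) ∈ K) {B : ℕ → Set Y}
    (hB : ∀ n, MeasurableSet (B n)) (hBν : ∑' n, ν (B n) ≠ ∞) {c : ℝ} (hc : 0 < c) :
    ∃ n, ∫ y in B n, g n y ∂ν ≤ c := by
  by_contra! hlow
  have htail : ∀ a, ∀ᶠ b in atTop, ∫ y in ⋃ m ≥ b, B m, |g a y| ∂ν ≤ c / 8 := fun a =>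
    (tendsto_setIntegral_iUnion_ge_nhds_zero hB (measure_limsup_atTop_eq_zero hBν)
      (L1.integrable_coeFn (g a)).abs).eventually (ge_mem_nhds (by positivity))
  obtain ⟨φ, hφ, -, hφB⟩ := Filter.extraction_forall_lt_of_frequently (P := fun _ => True)
    (r := fun a b => ∫ y in ⋃ m ≥ b, B m, |g a y| ∂ν ≤ c / 8) fun s =>
      ((eventually_all_finset s).2 fun a _ => htail a).frequently.mono fun _ h => ⟨trivial, h⟩
  set E : ℕ → Set Y := fun k => ⋃ j ≥ k + 1, B (φ j)
  have hE : ∀ k, MeasurableSet (E k) := fun k => .iUnion fun j => .iUnion fun _ => hB _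
  have hEg : ∀ k, ∫ y in E k, |g (φ k) y| ∂ν ≤ c / 8 := fun k =>
    (setIntegral_abs_mono_set (L1.integrable_coeFn _) (iUnion₂_subset fun j hj =>
      subset_biUnion_of_mem (hφ.monotone hj))).trans (hφB k (k + 1) k.lt_succ_self)
  obtain ⟨k, hk⟩ := hK.exists_setIntegral_le_of_tail_le (g := g ∘ φ) (fun k => hgK _)
    (A := fun k => B (φ k) \ E k) (fun k => (hB _).diff (hE k))
    (pairwise_disjoint_diff_iUnion_ge_succ _) (half_pos hc) fun k =>
      (setIntegral_abs_mono_set (L1.integrable_coeFn _)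
        (iUnion₂_mono fun j _ => sdiff_subset)).trans ((hEg k).trans_eq (by ring))
  simp only [Function.comp_apply] at hk
  linarith [sub_le_setIntegral_diff (L1.integrable_coeFn (g (φ k))) (B (φ k)) (hE k), hEg k,
    hlow (φ k)]

theorem unifIntegrable_of_isCompact_weakSpace {ι : Type*} (hK : IsCompact K) {f : ι → Lp ℝ 1 ν}
    (hfK : ∀ i, toWeakSpace ℝ _ (f i) ∈ K) : UnifIntegrable (fun i => ⇑(f i)) 1 ν := by
  intro ε hε
  by_contra! hbad
  have hhump : ∀ n : ℕ, ∃ g : Lp ℝ 1 ν, toWeakSpace ℝ _ g ∈ K ∪ -K ∧ ∃ t, MeasurableSet t ∧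
      ν t ≤ ENNReal.ofReal ((1 / 2) ^ n) ∧ ε / 2 < ∫ y in t, g y ∂ν := by
    intro n
    obtain ⟨i, s, hs, hνs, hεs⟩ := hbad _ (by positivity : (0 : ℝ) < (1 / 2) ^ n)
    rw [Lp.eLpNorm_indicator_eq_ofReal_setIntegral_abs _ hs, ENNReal.ofReal_lt_ofReal_iff'] at hεs
    obtain ⟨t, hts, ht, g, hg, hgt⟩ := Lp.exists_lt_setIntegral_of_lt_setIntegral_abs (f i) hs hεs.1
    refine ⟨g, ?_, t, ht, (measure_mono hts).trans hνs, hgt⟩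
    rcases hg with rfl | rfl
    exacts [.inl (hfK i), .inr (by simpa using hfK i)]
  choose g hgK B hB hνB hgB using hhump
  have hBν : ∑' n, ν (B n) ≠ ∞ :=
    ne_top_of_le_ne_top ENNReal.ofReal_ne_top <| (ENNReal.tsum_le_tsum hνB).trans_eq
      (ENNReal.ofReal_tsum_of_nonneg (fun n => by positivity) summable_geometric_two).symm
  obtain ⟨n, hn⟩ := (hK.union hK.neg).exists_setIntegral_le_of_tsum_measure_ne_top hgK hB hBν
    (half_pos hε)
  exact (hgB n).not_ge hn

end WeaklyCompact

end MeasureTheory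

theorem isWeaklyCompactOperator_zero {E F : Type*} [NormedAddCommGroup E] [NormedSpace ℝ E]
    [NormedAddCommGroup F] [NormedSpace ℝ F] : IsWeaklyCompactOperator (0 : E →L[ℝ] F) :=
  ⟨{0}, isCompact_singleton, fun _ _ => by simp⟩

theorem IsWeaklyCompactOperator.exists_setIntegral_abs_le {E Y : Type*} [NormedAddCommGroup E]
    [NormedSpace ℝ E] [MeasurableSpace Y] {ν : Measure Y} {W : E →L[ℝ] Lp ℝ 1 ν}
    (hW : IsWeaklyCompactOperator W) {ε : ℝ} (hε : 0 < ε) :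
    ∃ δ > 0, ∀ B, MeasurableSet B → ν B ≤ ENNReal.ofReal δ →
      ∀ x : E, ‖x‖ ≤ 1 → ∫ y in B, |W x y| ∂ν ≤ ε := by
  obtain ⟨C, hC, hWC⟩ := hW
  obtain ⟨δ, hδ, hWδ⟩ := unifIntegrable_of_isCompact_weakSpace hC
    (f := fun x : Metric.closedBall (0 : E) 1 => W x) (fun x => hWC x x.2) hε
  refine ⟨δ, hδ, fun B hB hνB x hx => ?_⟩
  have := hWδ ⟨x, mem_closedBall_zero_iff.2 hx⟩ B hB hνB
  rwa [Lp.eLpNorm_indicator_eq_ofReal_setIntegral_abs _ hB, ENNReal.ofReal_le_ofReal_iff hε.le]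
    at this

section LocalizedNorms

variable {X Y : Type*} [MeasurableSpace X] [MeasurableSpace Y] {μ : Measure X} {ν : Measure Y}
  (T : Lp ℝ 1 μ →L[ℝ] Lp ℝ 1 ν)

theorem opNormOn_le {S : Set Y} {r : ℝ}
    (h : ∀ f : Lp ℝ 1 μ, ‖f‖ ≤ 1 → ∫ y in S, |T f y| ∂ν ≤ r) : opNormOn T S ≤ r :=
  csSup_le ⟨_, 0, by simp, rfl⟩ (by rintro _ ⟨f, hf, rfl⟩; exact h f hf)

theorem opNormOn_nonneg (S : Set Y) : 0 ≤ opNormOn T S :=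
  Real.sSup_nonneg (by rintro _ ⟨f, -, rfl⟩; exact integral_nonneg fun _ => abs_nonneg _)

theorem alphaTheta_le {Θ : Set Y} {δ r : ℝ} (hδ : 0 < δ)
    (h : ∀ B ⊆ Θ, MeasurableSet B → ν B < ENNReal.ofReal δ → opNormOn T (Θᶜ ∪ B) ≤ r) :
    alphaTheta T Θ ≤ r := by
  unfold alphaTheta
  refine csInf_le_of_le ⟨0, ?_⟩ ⟨δ, hδ, rfl⟩
    (csSup_le ⟨_, ∅, empty_subset _, .empty, by simpa using hδ, rfl⟩ ?_)
  · rintro _ ⟨δ', -, rfl⟩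
    exact Real.sSup_nonneg (by rintro _ ⟨B, -, -, -, rfl⟩; exact opNormOn_nonneg T _)
  · rintro _ ⟨B, hBΘ, hB, hνB, rfl⟩
    exact h B hBΘ hB hνB

theorem le_weakEssNormOn {Θ : Set Y} {r : ℝ}
    (h : ∀ W : Lp ℝ 1 μ →L[ℝ] Lp ℝ 1 ν, IsWeaklyCompactOperator W →
      (∀ f, ∀ᵐ y ∂ν, y ∉ Θ → W f y = 0) → r ≤ ‖T - W‖) :
    r ≤ weakEssNormOn T Θ := by
  refine le_csInf ⟨_, 0, isWeaklyCompactOperator_zero, fun f => ?_, rfl⟩ ?_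
  · filter_upwards [Lp.coeFn_zero ℝ 1 ν] with y hy _ using hy
  · rintro _ ⟨W, hW, hWΘ, rfl⟩
    exact h W hW hWΘ

end LocalizedNorms

theorem alphaTheta_le_weakEssNormOn_general
    {X Y : Type*} [MeasurableSpace X] [MeasurableSpace Y]
    (μ : Measure X) (ν : Measure Y)
    (T : Lp ℝ 1 μ →L[ℝ] Lp ℝ 1 ν)
    (Θ : Set Y) :
    alphaTheta T Θ ≤ weakEssNormOn T Θ := by
  refine le_weakEssNormOn T fun W hW hWΘ => le_of_forall_pos_le_add fun ε hε => ?_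
  obtain ⟨δ, hδ, hWδ⟩ := hW.exists_setIntegral_abs_le hε
  refine alphaTheta_le T hδ fun B _ hB hνB => opNormOn_le T fun f hf => ?_
  calc ∫ y in Θᶜ ∪ B, |T f y| ∂ν ≤ ‖T f - W f‖ + ∫ y in B, |W f y| ∂ν :=
        Lp.setIntegral_compl_union_abs_le (T f) (W f) (hWΘ f) B
    _ ≤ ‖T - W‖ + ε := add_le_add (by simpa using (T - W).le_opNorm_of_le hf) (hWδ B hB hνB.le f hf)

/-- `α_Θ(T) ≤ ‖T‖_{w,Θ}` for every measurable set `Θ` of finite measure. -/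
theorem alphaTheta_le_weakEssNormOn
    {X Y : Type*} [MeasurableSpace X] [MeasurableSpace Y]
    (μ : Measure X) (ν : Measure Y)
    (hμ : StrictlyLocalizable μ) (hν : StrictlyLocalizable ν)
    (T : Lp ℝ 1 μ →L[ℝ] Lp ℝ 1 ν)
    (Θ : Set Y) (hΘ : MeasurableSet Θ) (hΘfin : ν Θ < ⊤) :
    alphaTheta T Θ ≤ weakEssNormOn T Θ :=
  alphaTheta_le_weakEssNormOn_general μ ν T Θ
end

section
/- Let (X, Σ, μ) and (Y, Γ, ν) be strictly localizable measure spaces and W : L¹(X, Σ, μ) → L¹(Y, Γ, ν) a weakly compact operator. Then there exists a σ-finite measurable set Θ ⊆ Y such that the range of W is contained in L¹(Θ, γ, ν), where γ = {A ∩ Θ : A ∈ Γ}. -/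
open MeasureTheory

/-!
Split `ν` into disjoint pieces `Z i` of finite measure and let `Θ` be the union of those pieces on
which some `W f` does not vanish a.e. By scaling `f` into the unit ball, `Θ` is σ-finite as soon
as, for each `ε > 0`, only finitely many pieces carry mass `≥ ε` of some `W f` with `‖f‖ ≤ 1`.
Otherwise there are `g n` in the weakly compact set `C` and disjoint `Z n` with
`∫_{Z n} |g n| ≥ ε`. Rosenthal's lemma yields an infinite `N` on which the off-diagonal masses
`∑_{n ∈ N, n ≠ m} ∫_{Z n} |g m|` are at most `ε/8`; let `g₀` be a weak cluster point of
`(g n)_{n ∈ N}`, and shrink `N` to a tail so that `∑_{n ∈ N} ∫_{Z n} |g₀| ≤ ε/8`. Pairing with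
the `L^∞` function equal to `sign (g n)` on `Z n` for `n ∈ N` and to `0` elsewhere gives a
functional `φ` with `φ (g m) ≥ 7ε/8` for `m ∈ N` but `|φ g₀| ≤ ε/8`, so `φ g₀` cannot be a
cluster point of the `φ (g m)`.
-/

open Set Function Filter MeasureTheory
open scoped ENNReal Topology

theorem ENNReal.tsum_add_tsum_diff_eq {α : Type*} (f : α → ℝ≥0∞) {s u : Set α} (h : s ⊆ u) :
    ∑' n : s, f n + ∑' n : ↥(u \ s), f n = ∑' n : u, f n := by
  rw [← ENNReal.summable.tsum_union_disjoint disjoint_sdiff_right ENNReal.summable,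
    union_sdiff_cancel h]

theorem exists_le_tsum_add_of_forall_exists_lt (r : ℕ → ℕ → ℝ≥0∞) {ε x : ℝ≥0∞}
    (hbad : ∀ N : Set ℕ, N.Infinite → ∃ m ∈ N, ε < ∑' n : ↥(N \ {m}), r m n)
    {a : ℕ → ℕ} {C : ℕ → Set ℕ} (hC : Pairwise (Disjoint on C)) (ha : ∀ j, a j ∈ C j)
    (hx : ∀ j, x ≤ ∑' n : C j, r (a j) n) :
    ∃ (a' : ℕ → ℕ) (C' : ℕ → Set ℕ), Pairwise (Disjoint on C') ∧ (∀ q, a' q ∈ C' q) ∧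
      ∀ q, x + ε ≤ ∑' n : C' q, r (a' q) n := by
  have ha_inj : Injective a := fun j j' h => hC.eq (not_disjoint_iff.2 ⟨a j, ha j, h ▸ ha j'⟩)
  have hrow : ∀ q, ∃ l, ε < ∑' n : ↥(range (fun l => a (Nat.pair q l)) \ {a (Nat.pair q l)}),
      r (a (Nat.pair q l)) n := fun q => by
    obtain ⟨_, ⟨l, rfl⟩, hl⟩ := hbad _ (infinite_range_of_injective
      (ha_inj.comp fun l l' h => (Nat.pair_eq_pair.1 h).2))
    exact ⟨l, hl⟩
  choose l hl using hrow
  -- merge the sets of block `q` into one, keeping the row `a (pair q (l q))` that was bad on it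
  refine ⟨fun q => a (Nat.pair q (l q)), fun q => ⋃ l, C (Nat.pair q l), ?_,
    fun q => mem_iUnion_of_mem _ (ha _), fun q => ?_⟩
  · intro q q' hqq'
    simp only [onFun, disjoint_iUnion_left, disjoint_iUnion_right]
    exact fun l' l => hC fun h => hqq' (Nat.pair_eq_pair.1 h).1
  · have hsub : range (fun l => a (Nat.pair q l)) \ {a (Nat.pair q (l q))} ⊆
        (⋃ l, C (Nat.pair q l)) \ C (Nat.pair q (l q)) := by
      rintro _ ⟨⟨l', rfl⟩, hl'⟩
      exact ⟨mem_iUnion_of_mem _ (ha _), fun h => hl' (congrArg a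
        (hC.eq (not_disjoint_iff.2 ⟨_, ha _, h⟩)))⟩
    rw [← ENNReal.tsum_add_tsum_diff_eq _ (subset_iUnion (fun l => C (Nat.pair q l)) (l q))]
    exact add_le_add (hx _) ((hl q).le.trans (ENNReal.tsum_mono_subtype _ hsub))

theorem exists_infinite_forall_tsum_diff_singleton_le (r : ℕ → ℕ → ℝ≥0∞) {M ε : ℝ≥0∞}
    (hM : M ≠ ∞) (hε : ε ≠ 0) (hr : ∀ m, ∑' n, r m n ≤ M) :
    ∃ N : Set ℕ, N.Infinite ∧ ∀ m ∈ N, ∑' n : ↥(N \ {m}), r m n ≤ ε := by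
  by_contra! hbad
  have hchain : ∀ k : ℕ, ∃ (a : ℕ → ℕ) (C : ℕ → Set ℕ), Pairwise (Disjoint on C) ∧
      (∀ j, a j ∈ C j) ∧ ∀ j, k * ε ≤ ∑' n : C j, r (a j) n := by
    intro k
    induction k with
    | zero => exact ⟨id, fun j => {j}, fun j j' h => disjoint_singleton.2 h, fun j => rfl, by simp⟩
    | succ k ih =>
      obtain ⟨a, C, hC, ha, hk⟩ := ih
      obtain ⟨a', C', h⟩ := exists_le_tsum_add_of_forall_exists_lt r hbad hC ha hk
      simpa [add_mul] using ⟨a', C', h⟩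
  obtain ⟨k, hk⟩ := ENNReal.exists_nat_mul_gt hε hM
  obtain ⟨a, C, -, -, hak⟩ := hchain k
  exact (hk.trans_le (hak 0)).not_ge
    ((ENNReal.tsum_comp_le_tsum_of_injective Subtype.val_injective _).trans (hr _))

theorem ENNReal.exists_mem_cofinite_tsum_lt {α : Type*} {f : α → ℝ≥0∞} (hf : ∑' a, f a ≠ ∞)
    {η : ℝ≥0∞} (hη : 0 < η) : ∃ T : Set α, T ∈ cofinite ∧ ∑' a : T, f a < η := by
  obtain ⟨F, hF⟩ := ((ENNReal.tendsto_tsum_compl_atTop_zero hf).eventually (gt_mem_nhds hη)).exists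
  exact ⟨(↑F)ᶜ, F.finite_toSet.compl_mem_cofinite, hF⟩

theorem IsCompact.exists_forall_mapClusterPt_dual {ι E : Type*} [NormedAddCommGroup E]
    [NormedSpace ℝ E] {C : Set (WeakSpace ℝ E)} (hC : IsCompact C) {l : Filter ι} [l.NeBot]
    {x : ι → E} (hx : ∀ i, toWeakSpace ℝ E (x i) ∈ C) :
    ∃ x₀ : E, ∀ φ : E →L[ℝ] ℝ, MapClusterPt (φ x₀) l (fun i => φ (x i)) := by
  obtain ⟨y, -, hy⟩ := hC (f := map (fun i => toWeakSpace ℝ E (x i)) l)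
    (le_principal_iff.2 (mem_map.2 (univ_mem' hx)))
  refine ⟨(toWeakSpace ℝ E).symm y, fun φ => ?_⟩
  have hφ : Continuous fun w : WeakSpace ℝ E => φ ((toWeakSpace ℝ E).symm w) :=
    WeakBilin.eval_continuous _ φ
  simpa [MapClusterPt, map_map, comp_def] using hy.map hφ.continuousAt tendsto_map

section

variable {Y : Type*} [MeasurableSpace Y] {ν : Measure Y}

theorem setLIntegral_enorm_lt_top (h : Lp ℝ 1 ν) (A : Set Y) :
    ∫⁻ y in A, ‖h y‖ₑ ∂ν < ∞ :=
  (L1.integrable_coeFn h).integrableOn.hasFiniteIntegral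

theorem tsum_setLIntegral_enorm_le_enorm {ι : Type*} [Countable ι] {Z : ι → Set Y}
    (hZ : ∀ i, MeasurableSet (Z i)) (hZd : Pairwise (Disjoint on Z)) (h : Lp ℝ 1 ν) :
    ∑' i, ∫⁻ y in Z i, ‖h y‖ₑ ∂ν ≤ ‖h‖ₑ := by
  rw [← lintegral_iUnion hZ hZd, Lp.enorm_def, eLpNorm_one_eq_lintegral_enorm]
  exact setLIntegral_le_lintegral _ _

theorem setLIntegral_enorm_smul (c : ℝ) (g : Lp ℝ 1 ν) (A : Set Y) :
    ∫⁻ y in A, ‖(c • g) y‖ₑ ∂ν = ‖c‖ₑ * ∫⁻ y in A, ‖g y‖ₑ ∂ν := by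
  rw [← lintegral_const_mul' _ _ enorm_ne_top]
  exact lintegral_congr_ae (ae_restrict_of_ae ((Lp.coeFn_smul c g).mono fun y hy => by
    simp only [hy, Pi.smul_apply, enorm_smul]))

theorem setLIntegral_enorm_apply_eq_zero_of_forall_mem_closedBall {E : Type*}
    [NormedAddCommGroup E] [NormedSpace ℝ E] (W : E →L[ℝ] Lp ℝ 1 ν) {A : Set Y}
    (h : ∀ f ∈ Metric.closedBall (0 : E) 1, ∫⁻ y in A, ‖W f y‖ₑ ∂ν = 0) (f : E) :
    ∫⁻ y in A, ‖W f y‖ₑ ∂ν = 0 := by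
  have hc : 0 < (max ‖f‖ 1)⁻¹ := by positivity
  have hcf : (max ‖f‖ 1)⁻¹ • f ∈ Metric.closedBall 0 1 := by
    rw [mem_closedBall_zero_iff, norm_smul, Real.norm_of_nonneg hc.le]
    exact inv_mul_le_one_of_le₀ (le_max_left _ _) (zero_le_one.trans (le_max_right _ _))
  have := h _ hcf
  rw [map_smul, setLIntegral_enorm_smul, mul_eq_zero] at this
  exact this.resolve_left (by simpa using hc.ne')

theorem exists_clm_eq_integral_mul {s : Y → ℝ} (hs : MemLp s ∞ ν) :
    ∃ φ : Lp ℝ 1 ν →L[ℝ] ℝ, ∀ h, φ h = ∫ y, s y * h y ∂ν := by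
  refine ⟨(ContinuousLinearMap.mul ℝ ℝ).lpPairing ν ∞ 1 hs.toLp, fun h => ?_⟩
  rw [ContinuousLinearMap.lpPairing_eq_integral]
  exact integral_congr_ae (hs.coeFn_toLp.mono fun y hy => by simp [hy])

theorem enorm_integral_indicator_mul_le {μ : Measure Y} {S : Set Y} (hS : MeasurableSet S)
    {σ : Y → ℝ} (hσ : ∀ y, ‖σ y‖ ≤ 1) (h : Y → ℝ) :
    ‖∫ y, S.indicator σ y * h y ∂μ‖ₑ ≤ ∫⁻ y in S, ‖h y‖ₑ ∂μ := by
  refine (enorm_integral_le_lintegral_enorm _).trans ?_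
  rw [← lintegral_indicator hS]
  refine lintegral_mono fun y => ?_
  by_cases hy : y ∈ S
  · simp only [indicator_of_mem hy, enorm_mul]
    exact mul_le_of_le_one_left' (by simpa [← ofReal_norm] using hσ y)
  · simp [indicator_of_notMem hy]

theorem exists_measurable_forall_mul_eq_abs {Z : ℕ → Set Y} (hZ : ∀ n, MeasurableSet (Z n))
    (hZd : Pairwise (Disjoint on Z)) {g : ℕ → Y → ℝ} (hg : ∀ n, Measurable (g n)) :
    ∃ σ : Y → ℝ, Measurable σ ∧ (∀ y, ‖σ y‖ ≤ 1) ∧ ∀ n, ∀ y ∈ Z n, σ y * g n y = |g n y| := by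
  obtain ⟨F, hFm, hF⟩ := exists_measurable_piecewise Z hZ g hg
    (fun i j hij => by simp [(hZd hij).inter_eq])
  refine ⟨fun y => if 0 ≤ F y then 1 else -1,
    Measurable.ite (measurableSet_le measurable_const hFm) measurable_const measurable_const,
    fun y => by dsimp only; split_ifs <;> simp, fun n y hy => ?_⟩
  simp only [hF n hy]
  split_ifs with h0
  · rw [one_mul, abs_of_nonneg h0]
  · rw [neg_one_mul, abs_of_neg (not_le.1 h0)]

theorem exists_clm_norming_disjoint {Z : ℕ → Set Y} (hZ : ∀ n, MeasurableSet (Z n))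
    (hZd : Pairwise (Disjoint on Z)) (g : ℕ → Lp ℝ 1 ν) (N : Set ℕ) :
    ∃ φ : Lp ℝ 1 ν →L[ℝ] ℝ,
      (∀ h, ‖φ h‖ₑ ≤ ∑' n : N, ∫⁻ y in Z n, ‖h y‖ₑ ∂ν) ∧
      ∀ m ∈ N, (∫⁻ y in Z m, ‖g m y‖ₑ ∂ν).toReal
        - (∑' n : ↥(N \ {m}), ∫⁻ y in Z n, ‖g m y‖ₑ ∂ν).toReal ≤ φ (g m) := by
  obtain ⟨σ, hσm, hσ, hσg⟩ := exists_measurable_forall_mul_eq_abs hZ hZd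
    (fun n => (Lp.stronglyMeasurable (g n)).measurable)
  have hbiUnion : ∀ (A : Set ℕ) (h : Lp ℝ 1 ν),
      ∫⁻ y in ⋃ n ∈ A, Z n, ‖h y‖ₑ ∂ν = ∑' n : A, ∫⁻ y in Z n, ‖h y‖ₑ ∂ν := fun A h =>
    lintegral_biUnion A.to_countable (fun n _ => hZ n) (hZd.set_pairwise _) _
  set S := ⋃ n ∈ N, Z n
  have hS : MeasurableSet S := .biUnion N.to_countable fun n _ => hZ n
  have hs : ∀ y, ‖S.indicator σ y‖ ≤ 1 := fun y => (norm_indicator_le_norm_self _ _).trans (hσ y)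
  obtain ⟨φ, hφ⟩ := exists_clm_eq_integral_mul (ν := ν) (s := S.indicator σ)
    (memLp_top_of_bound (hσm.indicator hS).aestronglyMeasurable 1 (ae_of_all _ hs))
  refine ⟨φ, fun h => hbiUnion N h ▸ hφ h ▸ enorm_integral_indicator_mul_le hS hσ h,
    fun m hm => ?_⟩
  have hdiag : ∫ y in Z m, S.indicator σ y * g m y ∂ν = (∫⁻ y in Z m, ‖g m y‖ₑ ∂ν).toReal := by
    rw [← integral_norm_eq_lintegral_enorm (Lp.aestronglyMeasurable _).restrict]
    refine setIntegral_congr_fun (hZ m) fun y hy => ?_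
    rw [indicator_of_mem (mem_biUnion hm hy), hσg m y hy, Real.norm_eq_abs]
  have hoff : ‖∫ y in (Z m)ᶜ, S.indicator σ y * g m y ∂ν‖ₑ
      ≤ ∑' n : ↥(N \ {m}), ∫⁻ y in Z n, ‖g m y‖ₑ ∂ν := by
    have := enorm_integral_indicator_mul_le (μ := ν.restrict (Z m)ᶜ) hS hσ (g m)
    rw [Measure.restrict_restrict hS, ← sdiff_eq] at this
    refine this.trans ((lintegral_mono_set ?_).trans (hbiUnion _ _).le)
    rintro y ⟨hy, hym⟩
    obtain ⟨n, hn, hyn⟩ := mem_iUnion₂.1 hy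
    exact mem_biUnion ⟨hn, fun h => hym (h ▸ hyn)⟩ hyn
  have hoff' := ENNReal.toReal_mono ((hbiUnion _ _) ▸ (setLIntegral_enorm_lt_top _ _).ne) hoff
  rw [toReal_enorm, Real.norm_eq_abs] at hoff'
  have hint : Integrable (fun y => S.indicator σ y * g m y) ν :=
    (L1.integrable_coeFn (g m)).bdd_mul (hσm.indicator hS).aestronglyMeasurable (ae_of_all _ hs)
  rw [hφ, ← integral_add_compl (hZ m) hint, hdiag]
  linarith [neg_abs_le (∫ y in (Z m)ᶜ, S.indicator σ y * g m y ∂ν)]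

theorem exists_setLIntegral_enorm_lt_of_isCompact {C : Set (WeakSpace ℝ (Lp ℝ 1 ν))}
    (hC : IsCompact C) {g : ℕ → Lp ℝ 1 ν} (hgC : ∀ n, toWeakSpace ℝ _ (g n) ∈ C)
    {M : ℝ} (hgM : ∀ n, ‖g n‖ ≤ M) {Z : ℕ → Set Y} (hZ : ∀ n, MeasurableSet (Z n))
    (hZd : Pairwise (Disjoint on Z)) {ε : ℝ≥0∞} (hε : ε ≠ 0) :
    ∃ n, ∫⁻ y in Z n, ‖g n y‖ₑ ∂ν < ε := by
  by_contra! hlow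
  obtain ⟨δ, -, hδ0, hδε⟩ := ENNReal.lt_iff_exists_real_btwn.1 (pos_iff_ne_zero.2 hε)
  have hδ : 0 < δ := ENNReal.ofReal_pos.1 hδ0
  have hη : ENNReal.ofReal (δ / 8) ≠ 0 := by simpa using hδ
  have hrow : ∀ m, ∑' n, ∫⁻ y in Z n, ‖g m y‖ₑ ∂ν ≤ ENNReal.ofReal M := fun m =>
    (tsum_setLIntegral_enorm_le_enorm hZ hZd _).trans
      (by rw [← ofReal_norm]; exact ENNReal.ofReal_le_ofReal (hgM m))
  obtain ⟨N, hN, hNoff⟩ :=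
    exists_infinite_forall_tsum_diff_singleton_le _ ENNReal.ofReal_ne_top hη hrow
  have := hN.cofinite_inf_principal_neBot
  obtain ⟨g₀, hg₀⟩ := hC.exists_forall_mapClusterPt_dual (l := cofinite ⊓ 𝓟 N) hgC
  obtain ⟨T, hT, hg₀T⟩ := ENNReal.exists_mem_cofinite_tsum_lt
    ((tsum_setLIntegral_enorm_le_enorm hZ hZd g₀).trans_lt enorm_lt_top).ne (pos_iff_ne_zero.2 hη)
  obtain ⟨φ, hφ₀, hφdiag⟩ := exists_clm_norming_disjoint hZ hZd g (N ∩ T)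
  obtain ⟨m, hm, hφm⟩ : ∃ m ∈ N ∩ T, dist (φ (g m)) (φ g₀) < δ / 2 :=
    ((mapClusterPt_iff_frequently.1 (hg₀ φ) _ (Metric.ball_mem_nhds _ (by positivity))
      ).and_eventually (inter_mem (mem_inf_of_right (mem_principal_self N)) (mem_inf_of_left hT))).exists.imp
      fun m hm => ⟨hm.2, hm.1⟩
  have h₁ : δ ≤ (∫⁻ y in Z m, ‖g m y‖ₑ ∂ν).toReal :=
    (ENNReal.ofReal_le_iff_le_toReal (setLIntegral_enorm_lt_top _ _).ne).1 (hδε.le.trans (hlow m))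
  have h₂ : (∑' n : ↥((N ∩ T) \ {m}), ∫⁻ y in Z n, ‖g m y‖ₑ ∂ν).toReal ≤ δ / 8 :=
    ENNReal.toReal_le_of_le_ofReal (by positivity) ((ENNReal.tsum_mono_subtype
      (fun n => ∫⁻ y in Z n, ‖g m y‖ₑ ∂ν) (sdiff_subset_sdiff_left inter_subset_left)).trans
        (hNoff m hm.1))
  have h₃ : |φ g₀| ≤ δ / 8 := by
    rw [← Real.norm_eq_abs, ← toReal_enorm]
    exact ENNReal.toReal_le_of_le_ofReal (by positivity) ((hφ₀ g₀).trans
      ((ENNReal.tsum_mono_subtype (fun n => ∫⁻ y in Z n, ‖g₀ y‖ₑ ∂ν)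
      inter_subset_right).trans hg₀T.le))
  -- `φ (g m) ≥ 7δ/8` by `h₁, h₂`, yet `φ (g m)` is `δ/2`-close to `φ g₀` and `|φ g₀| ≤ δ/8`
  have := hφdiag m hm
  rw [Real.dist_eq] at hφm
  linarith [abs_lt.1 hφm, abs_le.1 h₃]

theorem finite_setOf_le_setLIntegral_enorm_of_isCompact {ι : Type*}
    {C : Set (WeakSpace ℝ (Lp ℝ 1 ν))} (hC : IsCompact C) {K : Set (Lp ℝ 1 ν)}
    (hKC : ∀ g ∈ K, toWeakSpace ℝ _ g ∈ C) {M : ℝ} (hKM : ∀ g ∈ K, ‖g‖ ≤ M)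
    {Z : ι → Set Y} (hZ : ∀ i, MeasurableSet (Z i)) (hZd : Pairwise (Disjoint on Z))
    {ε : ℝ≥0∞} (hε : ε ≠ 0) :
    {i | ∃ g ∈ K, ε ≤ ∫⁻ y in Z i, ‖g y‖ₑ ∂ν}.Finite := by
  by_contra hinf
  let e := Set.Infinite.natEmbedding _ hinf
  choose g hgK hg using fun n => (e n).2
  obtain ⟨n, hn⟩ := exists_setLIntegral_enorm_lt_of_isCompact hC (fun n => hKC _ (hgK n))
    (fun n => hKM _ (hgK n)) (fun n => hZ (e n)) (fun n n' h => hZd fun h' => h (e.injective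
      (Subtype.ext h'))) hε
  exact (hg n).not_gt hn

theorem countable_setOf_setLIntegral_enorm_ne_zero_of_isCompact {ι : Type*}
    {C : Set (WeakSpace ℝ (Lp ℝ 1 ν))} (hC : IsCompact C) {K : Set (Lp ℝ 1 ν)}
    (hKC : ∀ g ∈ K, toWeakSpace ℝ _ g ∈ C) {M : ℝ} (hKM : ∀ g ∈ K, ‖g‖ ≤ M)
    {Z : ι → Set Y} (hZ : ∀ i, MeasurableSet (Z i)) (hZd : Pairwise (Disjoint on Z)) :
    {i | ∃ g ∈ K, ∫⁻ y in Z i, ‖g y‖ₑ ∂ν ≠ 0}.Countable := by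
  refine (countable_iUnion fun n : ℕ => (finite_setOf_le_setLIntegral_enorm_of_isCompact hC hKC
    hKM hZ hZd (ENNReal.inv_ne_zero.2 (ENNReal.natCast_ne_top n))).countable).mono ?_
  rintro i ⟨g, hg, hne⟩
  obtain ⟨n, hn⟩ := ENNReal.exists_inv_nat_lt hne
  exact mem_iUnion.2 ⟨n, g, hg, hn.le⟩

theorem sigmaFinite_restrict_biUnion {ι : Type*} {I : Set ι} (hI : I.Countable) {Z : ι → Set Y}
    (hZ : ∀ i ∈ I, MeasurableSet (Z i)) (hZν : ∀ i ∈ I, ν (Z i) < ∞) :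
    SigmaFinite (ν.restrict (⋃ i ∈ I, Z i)) := by
  refine Measure.sigmaFinite_of_countable (S := insert (⋃ i ∈ I, Z i)ᶜ (Z '' I))
    ((hI.image Z).insert _) ?_ ?_
  · rintro _ (rfl | ⟨i, hi, rfl⟩)
    · rw [Measure.restrict_apply (MeasurableSet.biUnion hI hZ).compl, compl_inter_self,
        measure_empty]
      exact ENNReal.zero_lt_top
    · exact (Measure.restrict_apply_le _ _).trans_lt (hZν i hi)
  · rw [sUnion_insert, sUnion_image, compl_union_self]

theorem ae_of_forall_ae_imp_of_tsum_eq {ι : Type*} {Z : ι → Set Y}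
    (hνZ : ∀ A, MeasurableSet A → ν A = ∑' i, ν (A ∩ Z i)) {p : Y → Prop}
    (hp : MeasurableSet {y | p y}) (h : ∀ i, ∀ᵐ y ∂ν, y ∈ Z i → p y) : ∀ᵐ y ∂ν, p y := by
  rw [ae_iff, hνZ {y | ¬p y} hp.compl, ENNReal.tsum_eq_zero]
  exact fun i => measure_mono_null (fun y hy => fun hpy => hy.1 (hpy hy.2)) (ae_iff.1 (h i))

end

theorem weaklyCompact_range_supported_on_sigmaFinite_general
    {X Y : Type*} [MeasurableSpace X] [MeasurableSpace Y]
    (μ : Measure X) (ν : Measure Y)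
    (hν : StrictlyLocalizable ν)
    (W : Lp ℝ 1 μ →L[ℝ] Lp ℝ 1 ν) (hW : IsWeaklyCompactOperator W) :
    ∃ Θ : Set Y, MeasurableSet Θ ∧ SigmaFinite (ν.restrict Θ) ∧
      ∀ f : Lp ℝ 1 μ, ∀ᵐ y ∂ν, y ∉ Θ → (W f : Y → ℝ) y = 0 := by
  obtain ⟨ι, Z, hZd, -, hZ, -, hνZ⟩ := hν
  obtain ⟨C, hC, hWC⟩ := hW
  set I := {i | ∃ g ∈ W '' Metric.closedBall 0 1, ∫⁻ y in Z i, ‖g y‖ₑ ∂ν ≠ 0}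
  have hI : I.Countable := countable_setOf_setLIntegral_enorm_ne_zero_of_isCompact hC
    (by rintro _ ⟨f, hf, rfl⟩; exact hWC f hf)
    (by rintro _ ⟨f, hf, rfl⟩; exact W.le_opNorm_of_le (mem_closedBall_zero_iff.1 hf))
    (fun i => (hZ i).1) hZd
  have hΘ : MeasurableSet (⋃ i ∈ I, Z i) := .biUnion hI fun i _ => (hZ i).1
  refine ⟨_, hΘ, sigmaFinite_restrict_biUnion hI (fun i _ => (hZ i).1) (fun i _ => (hZ i).2),
    fun f => ae_of_forall_ae_imp_of_tsum_eq hνZ (hΘ.compl.imp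
      ((Lp.stronglyMeasurable _).measurable (measurableSet_singleton 0))) fun i => ?_⟩
  by_cases hi : i ∈ I
  · exact ae_of_all _ fun y hy hyΘ => absurd (mem_biUnion hi hy) hyΘ
  have hWf : ∫⁻ y in Z i, ‖W f y‖ₑ ∂ν = 0 :=
    setLIntegral_enorm_apply_eq_zero_of_forall_mem_closedBall W
      (fun f hf => by_contra fun hne => hi ⟨_, mem_image_of_mem W hf, hne⟩) f
  filter_upwards [(setLIntegral_eq_zero_iff (hZ i).1
    (Lp.stronglyMeasurable _).measurable.enorm).1 hWf] with y hy hyZ _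
  exact enorm_eq_zero.1 (hy hyZ)

/-- The range of a weakly compact operator between `L¹`-spaces of strictly
localizable measure spaces is (a.e.) supported in a σ-finite measurable set `Θ ⊆ Y`. -/
theorem weaklyCompact_range_supported_on_sigmaFinite
    {X Y : Type*} [MeasurableSpace X] [MeasurableSpace Y]
    (μ : Measure X) (ν : Measure Y)
    (hμ : StrictlyLocalizable μ) (hν : StrictlyLocalizable ν)
    (W : Lp ℝ 1 μ →L[ℝ] Lp ℝ 1 ν) (hW : IsWeaklyCompactOperator W) :
    ∃ Θ : Set Y, MeasurableSet Θ ∧ SigmaFinite (ν.restrict Θ) ∧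
      ∀ f : Lp ℝ 1 μ, ∀ᵐ y ∂ν, y ∉ Θ → (W f : Y → ℝ) y = 0 :=
  weaklyCompact_range_supported_on_sigmaFinite_general μ ν hν W hW
end
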